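/- arXiv:1610.01881 — 2 statements merged into one kernel-verified Lean document; each statement's English description precedes it below -/
import Mathlib

section
/- Let H be a Hopf algebra over a field k. The map from L(H^e) to H⊗H sending x⊗y to x_1 ⊗ y·S²(x_2) is an isomorphism of H-(H^e)-bimodules, where L(H^e) is H^e = H⊗H^op viewed as a left H-module via a→(x⊗y) = a_1 x ⊗ y S(a_2) (and right H^e-module by (x⊗y)←(a⊗b) = xa⊗by), and the target H⊗H is a free left H-module via multiplication on the first factor, with right H^e-action (x⊗y)←(a⊗b) = x a_1 ⊗ b y S²(a_2). Its inverse sends x⊗y to x_1 ⊗ y·S(x_2). -/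
/- STATEMENT 0: The map L(H^e) → H⊗H, x⊗y ↦ x_1 ⊗ y·S²(x_2), is an isomorphism of
H-(H^e)-bimodules, with inverse x⊗y ↦ x_1 ⊗ y·S(x_2). -/

open TensorProduct

noncomputable section

namespace Stmt0

variable {k : Type} [Field k] {H : Type} [Ring H] [HopfAlgebra k H]

variable (k H) in
/-- the antipode -/
def S : H →ₗ[k] H := HopfAlgebra.antipode k

variable (k H) in
/-- comultiplication -/
def Δ : H →ₗ[k] H ⊗[k] H := Coalgebra.comul

variable (k H) in
/-- multiplication -/
def mm : H ⊗[k] H →ₗ[k] H := LinearMap.mul' k H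

variable (k H) in
def α : (H ⊗[k] H) ⊗[k] H ≃ₗ[k] H ⊗[k] (H ⊗[k] H) := TensorProduct.assoc k H H H

variable (k H) in
def cc : H ⊗[k] H ≃ₗ[k] H ⊗[k] H := TensorProduct.comm k H H

variable (k H) in
def ttc : (H ⊗[k] H) ⊗[k] (H ⊗[k] H) ≃ₗ[k] (H ⊗[k] H) ⊗[k] (H ⊗[k] H) :=
  TensorProduct.tensorTensorTensorComm k H H H H

variable (k H) in
/-- `x ⊗ y ↦ x_1 ⊗ y·S²(x_2)`, the claimed isomorphism. -/
def φ : H ⊗[k] H →ₗ[k] H ⊗[k] H :=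
  (TensorProduct.map LinearMap.id
      (mm k H ∘ₗ TensorProduct.map LinearMap.id (S k H ∘ₗ S k H) ∘ₗ (cc k H).toLinearMap)) ∘ₗ
    (α k H).toLinearMap ∘ₗ TensorProduct.map (Δ k H) LinearMap.id

variable (k H) in
/-- `x ⊗ y ↦ x_1 ⊗ y·S(x_2)`, the claimed inverse. -/
def ψ : H ⊗[k] H →ₗ[k] H ⊗[k] H :=
  (TensorProduct.map LinearMap.id
      (mm k H ∘ₗ TensorProduct.map LinearMap.id (S k H) ∘ₗ (cc k H).toLinearMap)) ∘ₗ
    (α k H).toLinearMap ∘ₗ TensorProduct.map (Δ k H) LinearMap.id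

variable (k H) in
/-- left `H`-action on `L(H^e)`: `a → (x⊗y) = a_1 x ⊗ y S(a_2)`. -/
def lactSrc : H ⊗[k] (H ⊗[k] H) →ₗ[k] H ⊗[k] H :=
  (TensorProduct.map (mm k H)
      (mm k H ∘ₗ TensorProduct.map LinearMap.id (S k H) ∘ₗ (cc k H).toLinearMap)) ∘ₗ
    (ttc k H).toLinearMap ∘ₗ TensorProduct.map (Δ k H) LinearMap.id

variable (k H) in
/-- left `H`-action on the target: left multiplication on the first factor. -/
def lactTgt : H ⊗[k] (H ⊗[k] H) →ₗ[k] H ⊗[k] H :=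
  (TensorProduct.map (mm k H) LinearMap.id) ∘ₗ (α k H).symm.toLinearMap

variable (k H) in
/-- right `H^e`-action on `L(H^e)`: `(x⊗y) ← (a⊗b) = xa ⊗ by`. -/
def ractSrc : (H ⊗[k] H) ⊗[k] (H ⊗[k] H) →ₗ[k] H ⊗[k] H :=
  (TensorProduct.map (mm k H) (mm k H ∘ₗ (cc k H).toLinearMap)) ∘ₗ (ttc k H).toLinearMap

variable (k H) in
/-- right `H^e`-action on the target: `(x⊗y) ← (a⊗b) = x a_1 ⊗ b y S²(a_2)`. -/
def ractTgt : (H ⊗[k] H) ⊗[k] (H ⊗[k] H) →ₗ[k] H ⊗[k] H :=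
  (TensorProduct.map (mm k H)
      (mm k H ∘ₗ
        TensorProduct.map (mm k H ∘ₗ (cc k H).toLinearMap) (S k H ∘ₗ S k H) ∘ₗ
          (α k H).symm.toLinearMap ∘ₗ TensorProduct.map LinearMap.id (cc k H).toLinearMap)) ∘ₗ
    (TensorProduct.tensorTensorTensorComm k H H H (H ⊗[k] H)).toLinearMap ∘ₗ
      TensorProduct.map LinearMap.id
        ((α k H).toLinearMap ∘ₗ TensorProduct.map (Δ k H) LinearMap.id)

/-! Write `T_f (x ⊗ y) = x₁ ⊗ y f(x₂)`, so that `φ = T_{S²}` and `ψ = T_S`. Coassociativity gives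
`T_g ∘ T_f = T_h` with `h z = f(z₂) g(z₁)`; since `S` is an anti-homomorphism, both
`S²(z₂) S(z₁) = S(z₁ S(z₂))` and `S(z₂) S²(z₁) = S(S(z₁) z₂)` equal `ε(z) 1`, so `φ` and `ψ` are
mutually inverse.

In the algebra `H ⊗ H`, every `T_f` commutes with left multiplication by `1 ⊗ q`, and for
multiplicative `f` such as `S²` we have `T_f (u (a ⊗ 1)) = T_f u · T_f (a ⊗ 1)`. Both actions on
`L(H^e)` are products in `H ⊗ H`: `a → (x ⊗ y) = (1 ⊗ y) ψ(a ⊗ 1) (x ⊗ 1)` and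
`(x ⊗ y) ← (a ⊗ b) = (1 ⊗ b)(x ⊗ y)(a ⊗ 1)`. Equivariance therefore follows from these two rules
together with `φ ψ = id`. -/

open Coalgebra HopfAlgebra

section Twist

lemma _root_.Coalgebra.sum_counit_right_smul {R A : Type*} [CommSemiring R] [AddCommMonoid A]
    [Module R A] [Coalgebra R A] {a : A} {ι : Type*} (𝓡 : Repr R a ι) :
    ∑ i ∈ 𝓡.index, counit (R := R) (𝓡.right i) • 𝓡.left i = a := by
  simpa only [map_sum, TensorProduct.rid_tmul, one_smul] using
    congr(TensorProduct.rid R A $(sum_tmul_counit_eq 𝓡))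

variable {R A : Type*} [CommSemiring R] [Semiring A] [Bialgebra R A]

/-- `x ⊗ y ↦ x₁ ⊗ y f(x₂)` -/
def twist (f : A →ₗ[R] A) : A ⊗[R] A →ₗ[R] A ⊗[R] A :=
  TensorProduct.map LinearMap.id
      (LinearMap.mul' R A ∘ₗ TensorProduct.map LinearMap.id f ∘ₗ
        (TensorProduct.comm R A A).toLinearMap) ∘ₗ
    (TensorProduct.assoc R A A A).toLinearMap ∘ₗ TensorProduct.map comul LinearMap.id

/-- The convolution product of `f` and `g` as maps into `Aᵐᵒᵖ`: `z ↦ g(z₂) f(z₁)`. -/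
def convOp (f g : A →ₗ[R] A) : A →ₗ[R] A :=
  LinearMap.mul' R A ∘ₗ TensorProduct.map g f ∘ₗ (TensorProduct.comm R A A).toLinearMap ∘ₗ comul

lemma twist_tmul (f : A →ₗ[R] A) {x : A} {ι : Type*} (𝓡 : Repr R x ι) (y : A) :
    twist f (x ⊗ₜ y) = ∑ i ∈ 𝓡.index, 𝓡.left i ⊗ₜ (y * f (𝓡.right i)) := by
  simp [twist, ← 𝓡.eq, sum_tmul]

lemma convOp_apply (f g : A →ₗ[R] A) {z : A} {ι : Type*} (𝓡 : Repr R z ι) :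
    convOp f g z = ∑ i ∈ 𝓡.index, g (𝓡.right i) * f (𝓡.left i) := by
  simp [convOp, ← 𝓡.eq]

lemma twist_comp_twist (f g : A →ₗ[R] A) : twist g ∘ₗ twist f = twist (convOp g f) := by
  refine TensorProduct.ext' fun x y ↦ ?_
  let 𝓡 := ℛ R x
  have coassoc := congr(LinearMap.lTensor A (LinearMap.mulLeft R y ∘ₗ LinearMap.mul' R A ∘ₗ
      TensorProduct.map f g ∘ₗ (TensorProduct.comm R A A).toLinearMap)
    $(sum_tmul_tmul_eq 𝓡 (fun i ↦ ℛ R (𝓡.left i)) (fun i ↦ ℛ R (𝓡.right i))))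
  simp only [map_sum, LinearMap.lTensor_tmul, LinearMap.comp_apply, LinearEquiv.coe_coe,
    TensorProduct.comm_tmul, TensorProduct.map_tmul, LinearMap.mul'_apply,
    LinearMap.mulLeft_apply] at coassoc
  simp only [LinearMap.comp_apply, twist_tmul _ 𝓡, map_sum, twist_tmul _ (ℛ R (𝓡.left _)),
    convOp_apply _ _ (ℛ R (𝓡.right _)), Finset.mul_sum, mul_assoc, TensorProduct.tmul_sum]
  exact coassoc

lemma twist_algebraMap_comp_counit : twist (Algebra.linearMap R A ∘ₗ counit) = LinearMap.id := by
  refine TensorProduct.ext' fun x y ↦ ?_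
  simp only [LinearMap.comp_apply, twist_tmul _ (ℛ R x), Algebra.linearMap_apply,
    ← Algebra.commutes, ← Algebra.smul_def, TensorProduct.tmul_smul, TensorProduct.smul_tmul',
    ← TensorProduct.sum_tmul, sum_counit_right_smul, LinearMap.id_apply]

lemma twist_one_tmul_mul (f : A →ₗ[R] A) (q : A) (u : A ⊗[R] A) :
    twist f ((1 ⊗ₜ q) * u) = (1 ⊗ₜ q) * twist f u := by
  induction u using TensorProduct.induction_on with
  | zero => simp
  | tmul x y => simp [twist_tmul _ (ℛ R x), Finset.mul_sum, mul_assoc]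
  | add u v hu hv => simp only [mul_add, map_add, hu, hv]

lemma twist_mul_tmul_one {f : A →ₗ[R] A} (hf : ∀ a b, f (a * b) = f a * f b)
    (u : A ⊗[R] A) (a : A) : twist f (u * (a ⊗ₜ 1)) = twist f u * twist f (a ⊗ₜ 1) := by
  induction u using TensorProduct.induction_on with
  | zero => simp
  | tmul x y =>
    rw [Algebra.TensorProduct.tmul_mul_tmul, mul_one, twist_tmul _ ((ℛ R x).mul (ℛ R a)),
      twist_tmul _ (ℛ R x), twist_tmul _ (ℛ R a), Finset.sum_mul_sum, Repr.mul_index,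
      Finset.sum_product]
    simp [hf, mul_assoc]
  | add u v hu hv => simp only [add_mul, map_add, hu, hv]

end Twist

section Antipode

variable {R A : Type*} [CommSemiring R] [Semiring A] [HopfAlgebra R A]

lemma antipode_algebraMap (r : R) : antipode R (algebraMap R A r) = algebraMap R A r := by
  rw [Algebra.algebraMap_eq_smul_one, map_smul, antipode_one]

lemma antipode_convOp_antipode_sq :
    convOp (antipode R) (antipode R ∘ₗ antipode R) = Algebra.linearMap R A ∘ₗ counit := by
  ext z
  simp [convOp_apply _ _ (ℛ R z), ← antipode_mul_antidistrib, ← map_sum,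
    sum_mul_antipode_eq_algebraMap_counit, antipode_algebraMap]

lemma antipode_sq_convOp_antipode :
    convOp (antipode R ∘ₗ antipode R) (antipode R) = Algebra.linearMap R A ∘ₗ counit := by
  ext z
  simp [convOp_apply _ _ (ℛ R z), ← antipode_mul_antidistrib, ← map_sum,
    sum_antipode_mul_eq_algebraMap_counit, antipode_algebraMap]

lemma antipode_antipode_mul (a b : A) :
    antipode R (antipode R (a * b)) = antipode R (antipode R a) * antipode R (antipode R b) := by
  simp only [antipode_mul_antidistrib]

end Antipode

lemma φ_eq_twist : φ k H = twist (S k H ∘ₗ S k H) := rfl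

lemma ψ_eq_twist : ψ k H = twist (S k H) := rfl

lemma ψ_comp_φ : ψ k H ∘ₗ φ k H = LinearMap.id := by
  rw [φ_eq_twist, ψ_eq_twist, twist_comp_twist, S, antipode_convOp_antipode_sq,
    twist_algebraMap_comp_counit]

lemma φ_comp_ψ : φ k H ∘ₗ ψ k H = LinearMap.id := by
  rw [φ_eq_twist, ψ_eq_twist, twist_comp_twist, S, antipode_sq_convOp_antipode,
    twist_algebraMap_comp_counit]

lemma lactSrc_tmul (a x y : H) :
    lactSrc k H (a ⊗ₜ (x ⊗ₜ y)) = (1 ⊗ₜ y) * ψ k H (a ⊗ₜ 1) * (x ⊗ₜ 1) := by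
  rw [ψ_eq_twist, twist_tmul _ (ℛ k a)]
  simp [lactSrc, ← (ℛ k a).eq, Δ, ttc, cc, mm, sum_tmul, Finset.mul_sum, Finset.sum_mul]

lemma lactTgt_tmul (a : H) (m : H ⊗[k] H) : lactTgt k H (a ⊗ₜ m) = (a ⊗ₜ 1) * m := by
  induction m using TensorProduct.induction_on with
  | zero => simp
  | tmul x y => simp [lactTgt, α, mm]
  | add m m' hm hm' => simp only [tmul_add, map_add, mul_add, hm, hm']

lemma ractSrc_tmul (m : H ⊗[k] H) (a b : H) :
    ractSrc k H (m ⊗ₜ (a ⊗ₜ b)) = (1 ⊗ₜ b) * m * (a ⊗ₜ 1) := by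
  induction m using TensorProduct.induction_on with
  | zero => simp
  | tmul x y => simp [ractSrc, ttc, cc, mm]
  | add m m' hm hm' => simp only [add_tmul, map_add, mul_add, add_mul, hm, hm']

lemma ractTgt_tmul (m : H ⊗[k] H) (a b : H) :
    ractTgt k H (m ⊗ₜ (a ⊗ₜ b)) = (1 ⊗ₜ b) * m * φ k H (a ⊗ₜ 1) := by
  induction m using TensorProduct.induction_on with
  | zero => simp
  | tmul x y =>
    rw [φ_eq_twist, twist_tmul _ (ℛ k a)]
    simp [ractTgt, ← (ℛ k a).eq, Δ, α, cc, mm, S, sum_tmul, Finset.mul_sum, tmul_sum, mul_assoc]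
  | add m m' hm hm' => simp only [add_tmul, map_add, mul_add, add_mul, hm, hm']

lemma φ_lactSrc (a : H) (m : H ⊗[k] H) :
    φ k H (lactSrc k H (a ⊗ₜ m)) = lactTgt k H (a ⊗ₜ φ k H m) := by
  induction m using TensorProduct.induction_on with
  | zero => simp
  | tmul x y =>
    calc φ k H (lactSrc k H (a ⊗ₜ (x ⊗ₜ y)))
        = (1 ⊗ₜ y) * φ k H (ψ k H (a ⊗ₜ 1)) * φ k H (x ⊗ₜ 1) := by
          rw [lactSrc_tmul, φ_eq_twist, twist_mul_tmul_one antipode_antipode_mul,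
            twist_one_tmul_mul]
      _ = (a ⊗ₜ 1) * ((1 ⊗ₜ y) * φ k H (x ⊗ₜ 1)) := by
          rw [← LinearMap.comp_apply (φ k H), φ_comp_ψ, LinearMap.id_apply, ← mul_assoc]
          simp only [Algebra.TensorProduct.tmul_mul_tmul, one_mul, mul_one]
      _ = lactTgt k H (a ⊗ₜ φ k H (x ⊗ₜ y)) := by
          rw [lactTgt_tmul, φ_eq_twist, ← twist_one_tmul_mul, Algebra.TensorProduct.tmul_mul_tmul,
            one_mul, mul_one]
  | add m m' hm hm' => simp only [tmul_add, map_add, hm, hm']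

lemma φ_ractSrc (m c : H ⊗[k] H) :
    φ k H (ractSrc k H (m ⊗ₜ c)) = ractTgt k H (φ k H m ⊗ₜ c) := by
  induction c using TensorProduct.induction_on with
  | zero => simp
  | tmul a b =>
    rw [ractSrc_tmul, ractTgt_tmul, φ_eq_twist, twist_mul_tmul_one antipode_antipode_mul,
      twist_one_tmul_mul]
  | add c c' hc hc' => simp only [tmul_add, map_add, hc, hc']

/-- `φ : L(H^e) → H⊗H` is an isomorphism of `H`-`H^e`-bimodules with
inverse `ψ`. -/
theorem stmt0 :
    (ψ k H ∘ₗ φ k H = LinearMap.id ∧ φ k H ∘ₗ ψ k H = LinearMap.id) ∧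
    (∀ (a : H) (m : H ⊗[k] H), φ k H (lactSrc k H (a ⊗ₜ m)) = lactTgt k H (a ⊗ₜ φ k H m)) ∧
    (∀ (m c : H ⊗[k] H), φ k H (ractSrc k H (m ⊗ₜ c)) = ractTgt k H (φ k H m ⊗ₜ c)) :=
  ⟨⟨ψ_comp_φ, φ_comp_ψ⟩, φ_lactSrc, φ_ractSrc⟩

end Stmt0

end
end

section
/- In any cogroupoid C the 'antipode' maps satisfy: (i) S_{Y,X}: C(Y,X) → C(X,Y)^op is an algebra homomorphism; (ii) for any objects X,Y,Z and a ∈ C(Y,X), Δ^Z_{X,Y}(S_{Y,X}(a)) = S_{Z,X}(a_2^{Z,X}) ⊗ S_{Y,Z}(a_1^{Y,Z}). -/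
/- STATEMENT 14: In a cogroupoid, S_{Y,X} : C(Y,X) → C(X,Y)^op is an algebra homomorphism, and Δ^Z_{X,Y}(S_{Y,X}(a)) = S_{Z,X}(a_2^{Z,X}) ⊗ S_{Y,Z}(a_1^{Y,Z}) for Z ∈ {X,Y}. -/

namespace Stmt14

open TensorProduct

noncomputable section

set_option synthInstance.maxHeartbeats 1600000
set_option maxHeartbeats 3200000

variable (k : Type) [Field k]
variable (A : Type) [Ring A] [Algebra k A]
variable (B : Type) [Ring B] [Algebra k B]
variable (P : Type) [Ring P] [Algebra k P]
variable (Q : Type) [Ring Q] [Algebra k Q]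

/-- The data and axioms of a (connected) cogroupoid restricted to two objects `X, Y`:
`A = C(X,X)`, `B = C(Y,Y)`, `P = C(X,Y)`, `Q = C(Y,X)`, with all comultiplications
`Δ^Z_{U,V}`, counits `ε_X, ε_Y` and antipodes `S_{U,V}` between them.  In particular `A`
and `B` are Hopf algebras. -/
structure TwoCogroupoid where
  dA : A →ₐ[k] A ⊗[k] A          -- Δ^X_{X,X}
  dA' : A →ₐ[k] P ⊗[k] Q         -- Δ^Y_{X,X}
  dPX : P →ₐ[k] A ⊗[k] P         -- Δ^X_{X,Y}
  dPY : P →ₐ[k] P ⊗[k] B         -- Δ^Y_{X,Y}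
  dQX : Q →ₐ[k] Q ⊗[k] A         -- Δ^X_{Y,X}
  dQY : Q →ₐ[k] B ⊗[k] Q         -- Δ^Y_{Y,X}
  dB : B →ₐ[k] B ⊗[k] B          -- Δ^Y_{Y,Y}
  dB' : B →ₐ[k] Q ⊗[k] P         -- Δ^X_{Y,Y}
  eX : A →ₐ[k] k                 -- ε_X
  eY : B →ₐ[k] k                 -- ε_Y
  sA : A →ₗ[k] A                 -- S_{X,X}
  sP : P →ₗ[k] Q                 -- S_{X,Y}
  sQ : Q →ₗ[k] P                 -- S_{Y,X}
  sB : B →ₗ[k] B                 -- S_{Y,Y}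
  -- coassociativity on A
  coA1 : (TensorProduct.assoc k A A A).toLinearMap ∘ₗ
      TensorProduct.map dA.toLinearMap LinearMap.id ∘ₗ dA.toLinearMap =
    TensorProduct.map LinearMap.id dA.toLinearMap ∘ₗ dA.toLinearMap
  coA2 : (TensorProduct.assoc k P Q A).toLinearMap ∘ₗ
      TensorProduct.map dA'.toLinearMap LinearMap.id ∘ₗ dA.toLinearMap =
    TensorProduct.map LinearMap.id dQX.toLinearMap ∘ₗ dA'.toLinearMap
  coA3 : (TensorProduct.assoc k A P Q).toLinearMap ∘ₗ
      TensorProduct.map dPX.toLinearMap LinearMap.id ∘ₗ dA'.toLinearMap =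
    TensorProduct.map LinearMap.id dA'.toLinearMap ∘ₗ dA.toLinearMap
  coA4 : (TensorProduct.assoc k P B Q).toLinearMap ∘ₗ
      TensorProduct.map dPY.toLinearMap LinearMap.id ∘ₗ dA'.toLinearMap =
    TensorProduct.map LinearMap.id dQY.toLinearMap ∘ₗ dA'.toLinearMap
  -- coassociativity on P
  coP1 : (TensorProduct.assoc k A A P).toLinearMap ∘ₗ
      TensorProduct.map dA.toLinearMap LinearMap.id ∘ₗ dPX.toLinearMap =
    TensorProduct.map LinearMap.id dPX.toLinearMap ∘ₗ dPX.toLinearMap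
  coP2 : (TensorProduct.assoc k P Q P).toLinearMap ∘ₗ
      TensorProduct.map dA'.toLinearMap LinearMap.id ∘ₗ dPX.toLinearMap =
    TensorProduct.map LinearMap.id dB'.toLinearMap ∘ₗ dPY.toLinearMap
  coP3 : (TensorProduct.assoc k A P B).toLinearMap ∘ₗ
      TensorProduct.map dPX.toLinearMap LinearMap.id ∘ₗ dPY.toLinearMap =
    TensorProduct.map LinearMap.id dPY.toLinearMap ∘ₗ dPX.toLinearMap
  coP4 : (TensorProduct.assoc k P B B).toLinearMap ∘ₗ
      TensorProduct.map dPY.toLinearMap LinearMap.id ∘ₗ dPY.toLinearMap =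
    TensorProduct.map LinearMap.id dB.toLinearMap ∘ₗ dPY.toLinearMap
  -- coassociativity on Q
  coQ1 : (TensorProduct.assoc k Q A A).toLinearMap ∘ₗ
      TensorProduct.map dQX.toLinearMap LinearMap.id ∘ₗ dQX.toLinearMap =
    TensorProduct.map LinearMap.id dA.toLinearMap ∘ₗ dQX.toLinearMap
  coQ2 : (TensorProduct.assoc k B Q A).toLinearMap ∘ₗ
      TensorProduct.map dQY.toLinearMap LinearMap.id ∘ₗ dQX.toLinearMap =
    TensorProduct.map LinearMap.id dQX.toLinearMap ∘ₗ dQY.toLinearMap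
  coQ3 : (TensorProduct.assoc k Q P Q).toLinearMap ∘ₗ
      TensorProduct.map dB'.toLinearMap LinearMap.id ∘ₗ dQY.toLinearMap =
    TensorProduct.map LinearMap.id dA'.toLinearMap ∘ₗ dQX.toLinearMap
  coQ4 : (TensorProduct.assoc k B B Q).toLinearMap ∘ₗ
      TensorProduct.map dB.toLinearMap LinearMap.id ∘ₗ dQY.toLinearMap =
    TensorProduct.map LinearMap.id dQY.toLinearMap ∘ₗ dQY.toLinearMap
  -- coassociativity on B
  coB1 : (TensorProduct.assoc k Q A P).toLinearMap ∘ₗ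
      TensorProduct.map dQX.toLinearMap LinearMap.id ∘ₗ dB'.toLinearMap =
    TensorProduct.map LinearMap.id dPX.toLinearMap ∘ₗ dB'.toLinearMap
  coB2 : (TensorProduct.assoc k B Q P).toLinearMap ∘ₗ
      TensorProduct.map dQY.toLinearMap LinearMap.id ∘ₗ dB'.toLinearMap =
    TensorProduct.map LinearMap.id dB'.toLinearMap ∘ₗ dB.toLinearMap
  coB3 : (TensorProduct.assoc k Q P B).toLinearMap ∘ₗ
      TensorProduct.map dB'.toLinearMap LinearMap.id ∘ₗ dB.toLinearMap =
    TensorProduct.map LinearMap.id dPY.toLinearMap ∘ₗ dB'.toLinearMap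
  coB4 : (TensorProduct.assoc k B B B).toLinearMap ∘ₗ
      TensorProduct.map dB.toLinearMap LinearMap.id ∘ₗ dB.toLinearMap =
    TensorProduct.map LinearMap.id dB.toLinearMap ∘ₗ dB.toLinearMap
  -- counit laws
  cuA1 : (TensorProduct.rid k A).toLinearMap ∘ₗ
      TensorProduct.map LinearMap.id eX.toLinearMap ∘ₗ dA.toLinearMap = LinearMap.id
  cuA2 : (TensorProduct.lid k A).toLinearMap ∘ₗ
      TensorProduct.map eX.toLinearMap LinearMap.id ∘ₗ dA.toLinearMap = LinearMap.id
  cuP1 : (TensorProduct.rid k P).toLinearMap ∘ₗ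
      TensorProduct.map LinearMap.id eY.toLinearMap ∘ₗ dPY.toLinearMap = LinearMap.id
  cuP2 : (TensorProduct.lid k P).toLinearMap ∘ₗ
      TensorProduct.map eX.toLinearMap LinearMap.id ∘ₗ dPX.toLinearMap = LinearMap.id
  cuQ1 : (TensorProduct.rid k Q).toLinearMap ∘ₗ
      TensorProduct.map LinearMap.id eX.toLinearMap ∘ₗ dQX.toLinearMap = LinearMap.id
  cuQ2 : (TensorProduct.lid k Q).toLinearMap ∘ₗ
      TensorProduct.map eY.toLinearMap LinearMap.id ∘ₗ dQY.toLinearMap = LinearMap.id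
  cuB1 : (TensorProduct.rid k B).toLinearMap ∘ₗ
      TensorProduct.map LinearMap.id eY.toLinearMap ∘ₗ dB.toLinearMap = LinearMap.id
  cuB2 : (TensorProduct.lid k B).toLinearMap ∘ₗ
      TensorProduct.map eY.toLinearMap LinearMap.id ∘ₗ dB.toLinearMap = LinearMap.id
  -- antipode laws
  antXX1 : LinearMap.mul' k A ∘ₗ TensorProduct.map (sA) LinearMap.id ∘ₗ dA.toLinearMap =
    Algebra.linearMap k A ∘ₗ eX.toLinearMap
  antXX2 : LinearMap.mul' k A ∘ₗ TensorProduct.map LinearMap.id (sA) ∘ₗ dA.toLinearMap =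
    Algebra.linearMap k A ∘ₗ eX.toLinearMap
  antXY1 : LinearMap.mul' k P ∘ₗ TensorProduct.map LinearMap.id (sQ) ∘ₗ dA'.toLinearMap =
    Algebra.linearMap k P ∘ₗ eX.toLinearMap
  antXY2 : LinearMap.mul' k Q ∘ₗ TensorProduct.map (sP) LinearMap.id ∘ₗ dA'.toLinearMap =
    Algebra.linearMap k Q ∘ₗ eX.toLinearMap
  antYX1 : LinearMap.mul' k Q ∘ₗ TensorProduct.map LinearMap.id (sP) ∘ₗ dB'.toLinearMap =
    Algebra.linearMap k Q ∘ₗ eY.toLinearMap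
  antYX2 : LinearMap.mul' k P ∘ₗ TensorProduct.map (sQ) LinearMap.id ∘ₗ dB'.toLinearMap =
    Algebra.linearMap k P ∘ₗ eY.toLinearMap
  antYY1 : LinearMap.mul' k B ∘ₗ TensorProduct.map (sB) LinearMap.id ∘ₗ dB.toLinearMap =
    Algebra.linearMap k B ∘ₗ eY.toLinearMap
  antYY2 : LinearMap.mul' k B ∘ₗ TensorProduct.map LinearMap.id (sB) ∘ₗ dB.toLinearMap =
    Algebra.linearMap k B ∘ₗ eY.toLinearMap

variable {k A B P Q}

/-! ### Auxiliary machinery -/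

section Helpers

lemma mapSplit {M M' N N' : Type} [AddCommMonoid M] [AddCommMonoid M'] [AddCommMonoid N]
    [AddCommMonoid N'] [Module k M] [Module k M'] [Module k N] [Module k N']
    (f : M →ₗ[k] M') (g : N →ₗ[k] N') :
    TensorProduct.map f g =
      TensorProduct.map LinearMap.id g ∘ₗ TensorProduct.map f LinearMap.id := by
  rw [← TensorProduct.map_comp, LinearMap.id_comp, LinearMap.comp_id]

lemma mapSplit' {M M' N N' : Type} [AddCommMonoid M] [AddCommMonoid M'] [AddCommMonoid N]
    [AddCommMonoid N'] [Module k M] [Module k M'] [Module k N] [Module k N']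
    (f : M →ₗ[k] M') (g : N →ₗ[k] N') :
    TensorProduct.map f g =
      TensorProduct.map f LinearMap.id ∘ₗ TensorProduct.map LinearMap.id g := by
  rw [← TensorProduct.map_comp, LinearMap.id_comp, LinearMap.comp_id]

lemma mapRight {M M' N N' N'' : Type} [AddCommMonoid M] [AddCommMonoid M'] [AddCommMonoid N]
    [AddCommMonoid N'] [AddCommMonoid N''] [Module k M] [Module k M'] [Module k N]
    [Module k N'] [Module k N'']
    (f : M →ₗ[k] M') (g : N' →ₗ[k] N'') (h : N →ₗ[k] N') :
    TensorProduct.map f (g ∘ₗ h) =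
      TensorProduct.map f g ∘ₗ TensorProduct.map LinearMap.id h := by
  rw [← TensorProduct.map_comp, LinearMap.comp_id]

lemma mapLeft {M M' M'' N N' : Type} [AddCommMonoid M] [AddCommMonoid M'] [AddCommMonoid M'']
    [AddCommMonoid N] [AddCommMonoid N'] [Module k M] [Module k M'] [Module k M'']
    [Module k N] [Module k N']
    (g : M' →ₗ[k] M'') (h : M →ₗ[k] M') (f : N →ₗ[k] N') :
    TensorProduct.map (g ∘ₗ h) f =
      TensorProduct.map g f ∘ₗ TensorProduct.map h LinearMap.id := by
  rw [← TensorProduct.map_comp, LinearMap.comp_id]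

lemma mul'_algHom {R S : Type} [Ring R] [Algebra k R] [Ring S] [Algebra k S]
    (f : R →ₐ[k] S) (t : R ⊗[k] R) :
    LinearMap.mul' k S (TensorProduct.map f.toLinearMap f.toLinearMap t) =
      f (LinearMap.mul' k R t) := by
  induction t using TensorProduct.induction_on with
  | zero => simp
  | tmul x y => simp [LinearMap.mul'_apply]
  | add x y hx hy => simp [hx, hy]

end Helpers

section CogroupoidProofs

variable (T : TwoCogroupoid k A B P Q)

/-! #### Pointwise forms of the axioms -/

lemma antXY1e (x : A) :
    LinearMap.mul' k P (TensorProduct.map LinearMap.id T.sQ (T.dA' x)) =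
      algebraMap k P (T.eX x) := by
  simpa using LinearMap.congr_fun T.antXY1 x

lemma antYX2e (y : B) :
    LinearMap.mul' k P (TensorProduct.map T.sQ LinearMap.id (T.dB' y)) =
      algebraMap k P (T.eY y) := by
  simpa using LinearMap.congr_fun T.antYX2 y

lemma antXX2e (x : A) :
    LinearMap.mul' k A (TensorProduct.map LinearMap.id T.sA (T.dA x)) =
      algebraMap k A (T.eX x) := by
  simpa using LinearMap.congr_fun T.antXX2 x

lemma antYY1e (y : B) :
    LinearMap.mul' k B (TensorProduct.map T.sB LinearMap.id (T.dB y)) =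
      algebraMap k B (T.eY y) := by
  simpa using LinearMap.congr_fun T.antYY1 y

lemma cuQ1e (a : Q) :
    (TensorProduct.rid k Q) (TensorProduct.map LinearMap.id T.eX.toLinearMap (T.dQX a)) = a := by
  simpa using LinearMap.congr_fun T.cuQ1 a

lemma cuQ2e (a : Q) :
    (TensorProduct.lid k Q) (TensorProduct.map T.eY.toLinearMap LinearMap.id (T.dQY a)) = a := by
  simpa using LinearMap.congr_fun T.cuQ2 a

lemma cuA2e (x : A) :
    (TensorProduct.lid k A) (TensorProduct.map T.eX.toLinearMap LinearMap.id (T.dA x)) = x := by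
  simpa using LinearMap.congr_fun T.cuA2 x

lemma cuB2e (y : B) :
    (TensorProduct.lid k B) (TensorProduct.map T.eY.toLinearMap LinearMap.id (T.dB y)) = y := by
  simpa using LinearMap.congr_fun T.cuB2 y

lemma coQ3e (a : Q) :
    (TensorProduct.assoc k Q P Q)
        (TensorProduct.map T.dB'.toLinearMap LinearMap.id (T.dQY a)) =
      TensorProduct.map LinearMap.id T.dA'.toLinearMap (T.dQX a) := by
  simpa using LinearMap.congr_fun T.coQ3 a

lemma coA2e (x : A) :
    (TensorProduct.assoc k P Q A)
        (TensorProduct.map T.dA'.toLinearMap LinearMap.id (T.dA x)) =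
      TensorProduct.map LinearMap.id T.dQX.toLinearMap (T.dA' x) := by
  simpa using LinearMap.congr_fun T.coA2 x

lemma coA3e (x : A) :
    (TensorProduct.assoc k A P Q)
        (TensorProduct.map T.dPX.toLinearMap LinearMap.id (T.dA' x)) =
      TensorProduct.map LinearMap.id T.dA'.toLinearMap (T.dA x) := by
  simpa using LinearMap.congr_fun T.coA3 x

lemma coB2e (y : B) :
    (TensorProduct.assoc k B Q P)
        (TensorProduct.map T.dQY.toLinearMap LinearMap.id (T.dB' y)) =
      TensorProduct.map LinearMap.id T.dB'.toLinearMap (T.dB y) := by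
  simpa using LinearMap.congr_fun T.coB2 y

lemma coB3e (y : B) :
    (TensorProduct.assoc k Q P B)
        (TensorProduct.map T.dB'.toLinearMap LinearMap.id (T.dB y)) =
      TensorProduct.map LinearMap.id T.dPY.toLinearMap (T.dB' y) := by
  simpa using LinearMap.congr_fun T.coB3 y

/-! #### The target maps -/

/-- `a ↦ S_{X,X}(a₂) ⊗ S_{Y,X}(a₁)`, the RHS of statement (ii) with `Z = X`. -/
noncomputable def Gm : Q →ₗ[k] A ⊗[k] P :=
  TensorProduct.map T.sA T.sQ ∘ₗ (TensorProduct.comm k Q A).toLinearMap ∘ₗ T.dQX.toLinearMap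

lemma Gm_apply (q : Q) :
    Gm T q = TensorProduct.map T.sA T.sQ ((TensorProduct.comm k Q A) (T.dQX q)) := rfl

/-- `a ↦ S_{Y,X}(a₂) ⊗ S_{Y,Y}(a₁)`, the RHS of statement (ii) with `Z = Y`. -/
noncomputable def Hm : Q →ₗ[k] P ⊗[k] B :=
  TensorProduct.map T.sQ T.sB ∘ₗ (TensorProduct.comm k B Q).toLinearMap ∘ₗ T.dQY.toLinearMap

lemma Hm_apply (q : Q) :
    Hm T q = TensorProduct.map T.sQ T.sB ((TensorProduct.comm k B Q) (T.dQY q)) := rfl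

/-- `v ↦ S_{Y,X}(v) ⊗ 1`. -/
noncomputable def kap : Q →ₗ[k] P ⊗[k] B :=
  (TensorProduct.mk k P B).flip 1 ∘ₗ T.sQ

lemma kap_apply (v : Q) : kap T v = T.sQ v ⊗ₜ[k] (1 : B) := rfl

/-! #### Statement (ii), case `Z = X` -/

noncomputable def M2m : Q ⊗[k] (P ⊗[k] Q) →ₗ[k] A ⊗[k] P :=
  LinearMap.mul' k (A ⊗[k] P) ∘ₗ
    TensorProduct.map (T.dPX.toLinearMap ∘ₗ T.sQ)
      (LinearMap.mul' k (A ⊗[k] P) ∘ₗ TensorProduct.map T.dPX.toLinearMap (Gm T))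

lemma M2m_tmul (c : Q) (z : P ⊗[k] Q) :
    M2m T (c ⊗ₜ z) =
      T.dPX (T.sQ c) *
        LinearMap.mul' k (A ⊗[k] P) (TensorProduct.map T.dPX.toLinearMap (Gm T) z) := by
  simp [M2m, LinearMap.mul'_apply]

lemma r7' (z : P ⊗[k] Q) (x₂ : A) :
    LinearMap.mul' k (A ⊗[k] P)
      (TensorProduct.map (TensorProduct.mk k A P 1) (TensorProduct.map T.sA T.sQ)
        (TensorProduct.map LinearMap.id (TensorProduct.comm k Q A).toLinearMap
          ((TensorProduct.assoc k P Q A) (z ⊗ₜ x₂)))) =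
      T.sA x₂ ⊗ₜ LinearMap.mul' k P (TensorProduct.map LinearMap.id T.sQ z) := by
  induction z using TensorProduct.induction_on with
  | zero => simp
  | tmul p q =>
      simp [LinearMap.mul'_apply, Algebra.TensorProduct.tmul_mul_tmul]
  | add z₁ z₂ h₁ h₂ =>
      simp only [add_tmul, map_add, h₁, h₂, tmul_add]

lemma r7 (w : A ⊗[k] A) :
    LinearMap.mul' k (A ⊗[k] P)
      (TensorProduct.map (TensorProduct.mk k A P 1) (TensorProduct.map T.sA T.sQ)
        (TensorProduct.map LinearMap.id (TensorProduct.comm k Q A).toLinearMap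
          ((TensorProduct.assoc k P Q A)
            (TensorProduct.map T.dA'.toLinearMap LinearMap.id w)))) =
      T.sA ((TensorProduct.lid k A) (TensorProduct.map T.eX.toLinearMap LinearMap.id w))
        ⊗ₜ (1 : P) := by
  induction w using TensorProduct.induction_on with
  | zero => simp
  | tmul x₁ x₂ =>
      simp only [TensorProduct.map_tmul, LinearMap.id_coe, id_eq, AlgHom.toLinearMap_apply]
      rw [r7' T (T.dA' x₁) x₂, antXY1e T x₁]
      simp [Algebra.algebraMap_eq_smul_one, TensorProduct.lid_tmul, tmul_smul, smul_tmul',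
        map_smul]
  | add w₁ w₂ h₁ h₂ =>
      simp only [map_add, h₁, h₂, add_tmul]

lemma key2 (x : A) :
    LinearMap.mul' k (A ⊗[k] P)
      (TensorProduct.map (TensorProduct.mk k A P 1) (Gm T) (T.dA' x)) =
      T.sA x ⊗ₜ (1 : P) := by
  have h1 : TensorProduct.map (TensorProduct.mk k A P 1) (Gm T) =
      TensorProduct.map (TensorProduct.mk k A P 1) (TensorProduct.map T.sA T.sQ) ∘ₗ
        TensorProduct.map LinearMap.id (TensorProduct.comm k Q A).toLinearMap ∘ₗ
        TensorProduct.map LinearMap.id T.dQX.toLinearMap := by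
    unfold Gm
    rw [mapRight, mapRight]
  rw [h1]
  simp only [LinearMap.comp_apply]
  rw [← coA2e T x, r7 T (T.dA x), cuA2e T x]

lemma r5' (xa : A) (z : P ⊗[k] Q) :
    LinearMap.mul' k (A ⊗[k] P)
      (TensorProduct.map LinearMap.id (Gm T) ((TensorProduct.assoc k A P Q).symm (xa ⊗ₜ z))) =
      (xa ⊗ₜ (1 : P)) *
        LinearMap.mul' k (A ⊗[k] P)
          (TensorProduct.map (TensorProduct.mk k A P 1) (Gm T) z) := by
  induction z using TensorProduct.induction_on with
  | zero => simp
  | tmul p q =>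
      simp only [TensorProduct.assoc_symm_tmul, TensorProduct.map_tmul, LinearMap.id_coe,
        id_eq, LinearMap.mul'_apply, TensorProduct.mk_apply]
      rw [← mul_assoc, Algebra.TensorProduct.tmul_mul_tmul, mul_one, one_mul]
  | add z₁ z₂ h₁ h₂ =>
      simp only [tmul_add, map_add, h₁, h₂, mul_add]

lemma r5 (w : A ⊗[k] A) :
    LinearMap.mul' k (A ⊗[k] P)
      (TensorProduct.map LinearMap.id (Gm T)
        ((TensorProduct.assoc k A P Q).symm
          (TensorProduct.map LinearMap.id T.dA'.toLinearMap w))) =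
      LinearMap.mul' k A (TensorProduct.map LinearMap.id T.sA w) ⊗ₜ (1 : P) := by
  induction w using TensorProduct.induction_on with
  | zero => simp
  | tmul xa xb =>
      simp only [TensorProduct.map_tmul, LinearMap.id_coe, id_eq, AlgHom.toLinearMap_apply,
        LinearMap.mul'_apply]
      rw [r5' T xa (T.dA' xb), key2 T xb, Algebra.TensorProduct.tmul_mul_tmul, mul_one]
  | add w₁ w₂ h₁ h₂ =>
      simp only [map_add, h₁, h₂, add_tmul]

lemma key1 (x : A) :
    LinearMap.mul' k (A ⊗[k] P)
      (TensorProduct.map T.dPX.toLinearMap (Gm T) (T.dA' x)) =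
      algebraMap k (A ⊗[k] P) (T.eX x) := by
  rw [mapSplit]
  simp only [LinearMap.comp_apply]
  have h : TensorProduct.map T.dPX.toLinearMap LinearMap.id (T.dA' x) =
      (TensorProduct.assoc k A P Q).symm
        (TensorProduct.map LinearMap.id T.dA'.toLinearMap (T.dA x)) := by
    rw [← coA3e T x, LinearEquiv.symm_apply_apply]
  rw [h, r5 T (T.dA x), antXX2e T x, Algebra.TensorProduct.algebraMap_apply]

lemma r3 (w : Q ⊗[k] P) (c₃ : Q) :
    M2m T ((TensorProduct.assoc k Q P Q) (w ⊗ₜ c₃)) =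
      T.dPX (LinearMap.mul' k P (TensorProduct.map T.sQ LinearMap.id w)) * Gm T c₃ := by
  induction w using TensorProduct.induction_on with
  | zero => simp
  | tmul c₁ c₂ =>
      rw [TensorProduct.assoc_tmul, M2m_tmul]
      simp only [TensorProduct.map_tmul, LinearMap.id_coe, id_eq, LinearMap.mul'_apply,
        AlgHom.toLinearMap_apply, map_mul]
      rw [mul_assoc]
  | add w₁ w₂ h₁ h₂ =>
      simp only [add_tmul, map_add, h₁, h₂, add_mul]

lemma lemA (u : B ⊗[k] Q) :
    M2m T ((TensorProduct.assoc k Q P Q)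
        (TensorProduct.map T.dB'.toLinearMap LinearMap.id u)) =
      Gm T ((TensorProduct.lid k Q) (TensorProduct.map T.eY.toLinearMap LinearMap.id u)) := by
  induction u using TensorProduct.induction_on with
  | zero => simp
  | tmul r c =>
      simp only [TensorProduct.map_tmul, LinearMap.id_coe, id_eq, AlgHom.toLinearMap_apply]
      rw [r3 T (T.dB' r) c, antYX2e T r, AlgHom.commutes, TensorProduct.lid_tmul, map_smul,
        ← Algebra.smul_def]
  | add u₁ u₂ h₁ h₂ =>
      simp only [map_add, h₁, h₂]

lemma lemB (u : Q ⊗[k] A) :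
    M2m T (TensorProduct.map LinearMap.id T.dA'.toLinearMap u) =
      T.dPX (T.sQ ((TensorProduct.rid k Q)
        (TensorProduct.map LinearMap.id T.eX.toLinearMap u))) := by
  induction u using TensorProduct.induction_on with
  | zero => simp
  | tmul c x =>
      simp only [TensorProduct.map_tmul, LinearMap.id_coe, id_eq, AlgHom.toLinearMap_apply]
      rw [M2m_tmul, key1 T x, TensorProduct.rid_tmul]
      simp [Algebra.algebraMap_eq_smul_one, mul_smul_comm, map_smul]
  | add u₁ u₂ h₁ h₂ =>
      simp only [map_add, h₁, h₂]

lemma iiA (a : Q) : T.dPX (T.sQ a) = Gm T a := by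
  have h1 := lemB T (T.dQX a)
  have h2 := lemA T (T.dQY a)
  rw [cuQ1e T a] at h1
  rw [cuQ2e T a, coQ3e T a] at h2
  rw [← h1]
  exact h2

/-! #### Statement (ii), case `Z = Y` -/

noncomputable def M3m : Q ⊗[k] (P ⊗[k] Q) →ₗ[k] P ⊗[k] B :=
  LinearMap.mul' k (P ⊗[k] B) ∘ₗ
    TensorProduct.map (Hm T)
      (LinearMap.mul' k (P ⊗[k] B) ∘ₗ
        TensorProduct.map T.dPY.toLinearMap (T.dPY.toLinearMap ∘ₗ T.sQ))

lemma M3m_tmul (c : Q) (z : P ⊗[k] Q) :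
    M3m T (c ⊗ₜ z) =
      Hm T c *
        LinearMap.mul' k (P ⊗[k] B)
          (TensorProduct.map T.dPY.toLinearMap (T.dPY.toLinearMap ∘ₗ T.sQ) z) := by
  simp [M3m, LinearMap.mul'_apply]

lemma key3 (x : A) :
    LinearMap.mul' k (P ⊗[k] B)
      (TensorProduct.map T.dPY.toLinearMap (T.dPY.toLinearMap ∘ₗ T.sQ) (T.dA' x)) =
      algebraMap k (P ⊗[k] B) (T.eX x) := by
  rw [mapRight]
  simp only [LinearMap.comp_apply]
  rw [mul'_algHom T.dPY, antXY1e T x, AlgHom.commutes]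

lemma r10' (t : Q ⊗[k] P) (z₂ : B) :
    LinearMap.mul' k (P ⊗[k] B)
      (TensorProduct.map (kap T) LinearMap.id ((TensorProduct.assoc k Q P B) (t ⊗ₜ z₂))) =
      (LinearMap.mul' k P (TensorProduct.map T.sQ LinearMap.id t)) ⊗ₜ z₂ := by
  induction t using TensorProduct.induction_on with
  | zero => simp
  | tmul v p =>
      simp [kap_apply, LinearMap.mul'_apply, Algebra.TensorProduct.tmul_mul_tmul]
  | add t₁ t₂ h₁ h₂ =>
      simp only [add_tmul, map_add, h₁, h₂]

lemma r10 (w : B ⊗[k] B) :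
    LinearMap.mul' k (P ⊗[k] B)
      (TensorProduct.map (kap T) LinearMap.id
        ((TensorProduct.assoc k Q P B)
          (TensorProduct.map T.dB'.toLinearMap LinearMap.id w))) =
      (1 : P) ⊗ₜ ((TensorProduct.lid k B)
        (TensorProduct.map T.eY.toLinearMap LinearMap.id w)) := by
  induction w using TensorProduct.induction_on with
  | zero => simp
  | tmul z₁ z₂ =>
      simp only [TensorProduct.map_tmul, LinearMap.id_coe, id_eq, AlgHom.toLinearMap_apply]
      rw [r10' T (T.dB' z₁) z₂, antYX2e T z₁, TensorProduct.lid_tmul]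
      simp [Algebra.algebraMap_eq_smul_one, smul_tmul, tmul_smul]
  | add w₁ w₂ h₁ h₂ =>
      simp only [map_add, h₁, h₂, tmul_add]

lemma key5 (z : B) :
    LinearMap.mul' k (P ⊗[k] B)
      (TensorProduct.map (kap T) T.dPY.toLinearMap (T.dB' z)) = (1 : P) ⊗ₜ z := by
  rw [mapSplit' (kap T) T.dPY.toLinearMap]
  simp only [LinearMap.comp_apply]
  rw [← coB3e T z, r10 T (T.dB z), cuB2e T z]

lemma r9' (u : B) (t : Q ⊗[k] P) :
    LinearMap.mul' k (P ⊗[k] B)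
      (TensorProduct.map (TensorProduct.map T.sQ T.sB) T.dPY.toLinearMap
        (TensorProduct.map (TensorProduct.comm k B Q).toLinearMap LinearMap.id
          ((TensorProduct.assoc k B Q P).symm (u ⊗ₜ t)))) =
      ((1 : P) ⊗ₜ T.sB u) *
        LinearMap.mul' k (P ⊗[k] B)
          (TensorProduct.map (kap T) T.dPY.toLinearMap t) := by
  induction t using TensorProduct.induction_on with
  | zero => simp
  | tmul v p =>
      simp only [TensorProduct.assoc_symm_tmul, TensorProduct.map_tmul, LinearMap.id_coe,
        id_eq, LinearEquiv.coe_coe, TensorProduct.comm_tmul, LinearMap.mul'_apply,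
        AlgHom.toLinearMap_apply, kap_apply]
      rw [← mul_assoc, Algebra.TensorProduct.tmul_mul_tmul, mul_one, one_mul]
  | add t₁ t₂ h₁ h₂ =>
      simp only [tmul_add, map_add, h₁, h₂, mul_add]

lemma r9 (w : B ⊗[k] B) :
    LinearMap.mul' k (P ⊗[k] B)
      (TensorProduct.map (TensorProduct.map T.sQ T.sB) T.dPY.toLinearMap
        (TensorProduct.map (TensorProduct.comm k B Q).toLinearMap LinearMap.id
          ((TensorProduct.assoc k B Q P).symm
            (TensorProduct.map LinearMap.id T.dB'.toLinearMap w)))) =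
      (1 : P) ⊗ₜ (LinearMap.mul' k B (TensorProduct.map T.sB LinearMap.id w)) := by
  induction w using TensorProduct.induction_on with
  | zero => simp
  | tmul u z =>
      simp only [TensorProduct.map_tmul, LinearMap.id_coe, id_eq, AlgHom.toLinearMap_apply,
        LinearMap.mul'_apply]
      rw [r9' T u (T.dB' z), key5 T z, Algebra.TensorProduct.tmul_mul_tmul, one_mul]
  | add w₁ w₂ h₁ h₂ =>
      simp only [map_add, h₁, h₂, tmul_add]

lemma key4 (r : B) :
    LinearMap.mul' k (P ⊗[k] B)
      (TensorProduct.map (Hm T) T.dPY.toLinearMap (T.dB' r)) =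
      algebraMap k (P ⊗[k] B) (T.eY r) := by
  have hs : TensorProduct.map (Hm T) T.dPY.toLinearMap =
      TensorProduct.map (TensorProduct.map T.sQ T.sB) T.dPY.toLinearMap ∘ₗ
        TensorProduct.map (TensorProduct.comm k B Q).toLinearMap LinearMap.id ∘ₗ
        TensorProduct.map T.dQY.toLinearMap LinearMap.id := by
    unfold Hm
    rw [mapLeft, mapLeft]
  rw [hs]
  simp only [LinearMap.comp_apply]
  have h2 : TensorProduct.map T.dQY.toLinearMap LinearMap.id (T.dB' r) =
      (TensorProduct.assoc k B Q P).symm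
        (TensorProduct.map LinearMap.id T.dB'.toLinearMap (T.dB r)) := by
    rw [← coB2e T r, LinearEquiv.symm_apply_apply]
  rw [h2, r9 T (T.dB r), antYY1e T r]
  simp [Algebra.algebraMap_eq_smul_one, Algebra.TensorProduct.one_def, tmul_smul]

lemma s8 (w : Q ⊗[k] P) (c₃ : Q) :
    M3m T ((TensorProduct.assoc k Q P Q) (w ⊗ₜ c₃)) =
      LinearMap.mul' k (P ⊗[k] B)
          (TensorProduct.map (Hm T) T.dPY.toLinearMap w) * T.dPY (T.sQ c₃) := by
  induction w using TensorProduct.induction_on with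
  | zero => simp
  | tmul c₁ c₂ =>
      rw [TensorProduct.assoc_tmul, M3m_tmul]
      simp only [TensorProduct.map_tmul, LinearMap.id_coe, id_eq, LinearMap.mul'_apply,
        AlgHom.toLinearMap_apply, LinearMap.comp_apply]
      rw [mul_assoc]
  | add w₁ w₂ h₁ h₂ =>
      simp only [add_tmul, map_add, h₁, h₂, add_mul]

lemma lemB' (u : B ⊗[k] Q) :
    M3m T ((TensorProduct.assoc k Q P Q)
        (TensorProduct.map T.dB'.toLinearMap LinearMap.id u)) =
      T.dPY (T.sQ ((TensorProduct.lid k Q)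
        (TensorProduct.map T.eY.toLinearMap LinearMap.id u))) := by
  induction u using TensorProduct.induction_on with
  | zero => simp
  | tmul r c =>
      simp only [TensorProduct.map_tmul, LinearMap.id_coe, id_eq, AlgHom.toLinearMap_apply]
      rw [s8 T (T.dB' r) c, key4 T r, TensorProduct.lid_tmul]
      simp [Algebra.algebraMap_eq_smul_one, smul_mul_assoc, map_smul]
  | add u₁ u₂ h₁ h₂ =>
      simp only [map_add, h₁, h₂]

lemma lemA' (u : Q ⊗[k] A) :
    M3m T (TensorProduct.map LinearMap.id T.dA'.toLinearMap u) =
      Hm T ((TensorProduct.rid k Q)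
        (TensorProduct.map LinearMap.id T.eX.toLinearMap u)) := by
  induction u using TensorProduct.induction_on with
  | zero => simp
  | tmul c x =>
      simp only [TensorProduct.map_tmul, LinearMap.id_coe, id_eq, AlgHom.toLinearMap_apply]
      rw [M3m_tmul, key3 T x, TensorProduct.rid_tmul]
      simp [Algebra.algebraMap_eq_smul_one, mul_smul_comm, map_smul]
  | add u₁ u₂ h₁ h₂ =>
      simp only [map_add, h₁, h₂]

lemma iiB (a : Q) : T.dPY (T.sQ a) = Hm T a := by
  have h1 := lemB' T (T.dQY a)
  have h2 := lemA' T (T.dQX a)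
  rw [cuQ2e T a, coQ3e T a] at h1
  rw [cuQ1e T a] at h2
  rw [← h1]
  exact h2

/-! #### Statement (i): anti-multiplicativity -/

noncomputable def F2m : ((P ⊗[k] Q) ⊗[k] (P ⊗[k] Q)) →ₗ[k] P :=
  LinearMap.mul' k P ∘ₗ
    TensorProduct.map LinearMap.id
      (LinearMap.mul' k P ∘ₗ TensorProduct.map LinearMap.id T.sQ ∘ₗ
        (TensorProduct.comm k Q P).toLinearMap) ∘ₗ
    (TensorProduct.assoc k P Q P).toLinearMap ∘ₗ
    TensorProduct.map LinearMap.id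
      (LinearMap.mul' k P ∘ₗ TensorProduct.map LinearMap.id T.sQ)

noncomputable def M1m :
    ((Q ⊗[k] (P ⊗[k] Q)) ⊗[k] (Q ⊗[k] (P ⊗[k] Q))) →ₗ[k] P :=
  LinearMap.mul' k P ∘ₗ
    TensorProduct.map (T.sQ ∘ₗ LinearMap.mul' k Q) (F2m T) ∘ₗ
    (TensorProduct.tensorTensorTensorComm k Q (P ⊗[k] Q) Q (P ⊗[k] Q)).toLinearMap

lemma M1m_tmul (x₁ y₁ : Q) (u v : P ⊗[k] Q) :
    M1m T ((x₁ ⊗ₜ u) ⊗ₜ (y₁ ⊗ₜ v)) = T.sQ (x₁ * y₁) * F2m T (u ⊗ₜ v) := by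
  simp [M1m, TensorProduct.tensorTensorTensorComm_tmul, LinearMap.mul'_apply]

lemma f2m_tmul (z w : P ⊗[k] Q) :
    F2m T (z ⊗ₜ w) =
      LinearMap.mul' k P
        (TensorProduct.map LinearMap.id
          (LinearMap.mul' k P ∘ₗ TensorProduct.map LinearMap.id T.sQ ∘ₗ
            (TensorProduct.comm k Q P).toLinearMap)
          ((TensorProduct.assoc k P Q P)
            (z ⊗ₜ LinearMap.mul' k P (TensorProduct.map LinearMap.id T.sQ w)))) := by
  simp [F2m]

lemma s1' (z : P ⊗[k] Q) (c : k) :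
    LinearMap.mul' k P
      (TensorProduct.map LinearMap.id
        (LinearMap.mul' k P ∘ₗ TensorProduct.map LinearMap.id T.sQ ∘ₗ
          (TensorProduct.comm k Q P).toLinearMap)
        ((TensorProduct.assoc k P Q P) (z ⊗ₜ (algebraMap k P c)))) =
      c • LinearMap.mul' k P (TensorProduct.map LinearMap.id T.sQ z) := by
  induction z using TensorProduct.induction_on with
  | zero => simp
  | tmul p q =>
      simp only [TensorProduct.assoc_tmul, TensorProduct.map_tmul, LinearMap.id_coe, id_eq,
        LinearMap.comp_apply, LinearEquiv.coe_coe, TensorProduct.comm_tmul,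
        LinearMap.mul'_apply]
      rw [← Algebra.smul_def, mul_smul_comm]
  | add z₁ z₂ h₁ h₂ =>
      simp only [add_tmul, map_add, h₁, h₂, smul_add]

lemma d1 (u v : Q ⊗[k] A) :
    M1m T ((TensorProduct.map LinearMap.id T.dA'.toLinearMap u) ⊗ₜ
        (TensorProduct.map LinearMap.id T.dA'.toLinearMap v)) =
      T.sQ ((TensorProduct.rid k Q) (TensorProduct.map LinearMap.id T.eX.toLinearMap u) *
        (TensorProduct.rid k Q) (TensorProduct.map LinearMap.id T.eX.toLinearMap v)) := by
  induction u using TensorProduct.induction_on with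
  | zero => simp
  | tmul x₁ c =>
      induction v using TensorProduct.induction_on with
      | zero => simp
      | tmul y₁ d =>
          simp only [TensorProduct.map_tmul, LinearMap.id_coe, id_eq,
            AlgHom.toLinearMap_apply]
          rw [M1m_tmul, f2m_tmul, antXY1e T d, s1' T (T.dA' c) (T.eX d), antXY1e T c,
            TensorProduct.rid_tmul, TensorProduct.rid_tmul]
          simp [Algebra.algebraMap_eq_smul_one, smul_smul, mul_smul_comm, smul_mul_assoc,
            map_smul, mul_comm]
      | add v₁ v₂ h₁ h₂ =>
          simp only [map_add, tmul_add, h₁, h₂, mul_add]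
  | add u₁ u₂ h₁ h₂ =>
      simp only [map_add, add_tmul, h₁, h₂, add_mul]

lemma s3 (w z : Q ⊗[k] P) (x₃ y₃ : Q) :
    M1m T (((TensorProduct.assoc k Q P Q) (w ⊗ₜ x₃)) ⊗ₜ
        ((TensorProduct.assoc k Q P Q) (z ⊗ₜ y₃))) =
      LinearMap.mul' k P (TensorProduct.map T.sQ LinearMap.id (w * z)) *
        (T.sQ y₃ * T.sQ x₃) := by
  induction w using TensorProduct.induction_on with
  | zero => simp
  | tmul x₁ x₂ =>
      induction z using TensorProduct.induction_on with
      | zero => simp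
      | tmul y₁ y₂ =>
          rw [TensorProduct.assoc_tmul, TensorProduct.assoc_tmul, M1m_tmul, f2m_tmul]
          simp only [TensorProduct.map_tmul, LinearMap.id_coe, id_eq,
            LinearMap.mul'_apply, LinearMap.comp_apply, LinearEquiv.coe_coe,
            TensorProduct.assoc_tmul, TensorProduct.comm_tmul,
            Algebra.TensorProduct.tmul_mul_tmul, mul_assoc]
      | add z₁ z₂ h₁ h₂ =>
          simp only [add_tmul, tmul_add, map_add, h₁, h₂, mul_add, add_mul]
  | add w₁ w₂ h₁ h₂ =>
      simp only [add_tmul, tmul_add, map_add, h₁, h₂, add_mul]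

lemma d2 (u v : B ⊗[k] Q) :
    M1m T (((TensorProduct.assoc k Q P Q)
          (TensorProduct.map T.dB'.toLinearMap LinearMap.id u)) ⊗ₜ
        ((TensorProduct.assoc k Q P Q)
          (TensorProduct.map T.dB'.toLinearMap LinearMap.id v))) =
      T.sQ ((TensorProduct.lid k Q) (TensorProduct.map T.eY.toLinearMap LinearMap.id v)) *
        T.sQ ((TensorProduct.lid k Q)
          (TensorProduct.map T.eY.toLinearMap LinearMap.id u)) := by
  induction u using TensorProduct.induction_on with
  | zero => simp
  | tmul r x₃ =>
      induction v using TensorProduct.induction_on with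
      | zero => simp
      | tmul s y₃ =>
          simp only [TensorProduct.map_tmul, LinearMap.id_coe, id_eq,
            AlgHom.toLinearMap_apply]
          rw [s3 T (T.dB' r) (T.dB' s) x₃ y₃, ← map_mul, antYX2e T (r * s), map_mul,
            TensorProduct.lid_tmul, TensorProduct.lid_tmul, map_smul, map_smul,
            smul_mul_smul_comm, ← Algebra.smul_def, mul_comm (T.eY s) (T.eY r)]
      | add v₁ v₂ h₁ h₂ =>
          simp only [map_add, tmul_add, h₁, h₂, add_mul]
  | add u₁ u₂ h₁ h₂ =>
      simp only [map_add, add_tmul, h₁, h₂, mul_add]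

lemma antiMul (a b : Q) : T.sQ (a * b) = T.sQ b * T.sQ a := by
  have h1 := d1 T (T.dQX a) (T.dQX b)
  have h2 := d2 T (T.dQY a) (T.dQY b)
  rw [cuQ1e T a, cuQ1e T b] at h1
  rw [cuQ2e T a, cuQ2e T b, coQ3e T a, coQ3e T b] at h2
  exact h1.symm.trans h2

lemma sQ_one : T.sQ 1 = 1 := by
  have h := antYX2e T 1
  rw [map_one] at h
  simpa [Algebra.TensorProduct.one_def, LinearMap.mul'_apply] using h

end CogroupoidProofs


/-- (i) `S_{Y,X} : C(Y,X) → C(X,Y)^op` is an algebra homomorphism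
(anti-homomorphism into `C(X,Y)`); (ii) for `Z ∈ {X, Y}`,
`Δ^Z_{X,Y} ∘ S_{Y,X} = (S_{Z,X} ⊗ S_{Y,Z}) ∘ flip ∘ Δ^Z_{Y,X}`. -/
theorem stmt14 (T : TwoCogroupoid k A B P Q) :
    (∀ a b : Q, T.sQ (a * b) = T.sQ b * T.sQ a) ∧
    T.sQ 1 = 1 ∧
    (T.dPX.toLinearMap ∘ₗ T.sQ =
      TensorProduct.map T.sA T.sQ ∘ₗ (TensorProduct.comm k Q A).toLinearMap ∘ₗ
        T.dQX.toLinearMap) ∧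
    (T.dPY.toLinearMap ∘ₗ T.sQ =
      TensorProduct.map T.sQ T.sB ∘ₗ (TensorProduct.comm k B Q).toLinearMap ∘ₗ
        T.dQY.toLinearMap) := by
  refine ⟨antiMul T, sQ_one T, ?_, ?_⟩
  · apply LinearMap.ext
    intro a
    simp only [LinearMap.comp_apply, AlgHom.toLinearMap_apply, LinearEquiv.coe_coe]
    exact (iiA T a).trans (Gm_apply T a)
  · apply LinearMap.ext
    intro a
    simp only [LinearMap.comp_apply, AlgHom.toLinearMap_apply, LinearEquiv.coe_coe]
    exact (iiB T a).trans (Hm_apply T a)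

end

end Stmt14
end
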